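/- Let E ∈ Mat_N(ℤ) be invertible over ℚ with E_{ij} ≥ 0, W(x) = ∑_i ∏_j x_j^{E_{ij}}, and let g = diag(e^{2πi g₁},…,e^{2πi g_N}) with g_j ∈ ℚ. Then W(g·x) = W(x) for all x ∈ ℂ^N if and only if E·(g₁,…,g_N)^T ∈ ℤ^N. -/

import Mathlib

/-!
Substituting `g·x` turns the `i`-th monomial `x^{Eᵢ}` into `χ(Eᵢ) x^{Eᵢ}` with
`χ(n) = exp(2πi ∑ⱼ nⱼ gⱼ)`, and `χ(Eᵢ) = exp(2πi (E g)ᵢ)` because `E ≥ 0`. A polynomial function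
over `ℂ` determines its coefficients, and the coefficient of `x^{Eᵢ}` is `k χ(Eᵢ)` on one side
and `k` on the other, where `k ≥ 1` counts the rows of `E` equal to `Eᵢ`. Hence `W` is invariant
exactly when every `χ(Eᵢ) = 1`, i.e. when `E g ∈ ℤ^N`.
-/

open Finset MvPolynomial

section MonomialSums

variable {σ ι : Type*} [Fintype ι]

theorem MvPolynomial.coeff_sum_monomial_comp {R : Type*} [CommSemiring R] [DecidableEq σ]
    (d : ι → σ →₀ ℕ) (χ : (σ →₀ ℕ) → R) (e : σ →₀ ℕ) :
    coeff e (∑ i, monomial (d i) (χ (d i))) = #{i | d i = e} • χ e := by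
  simp only [coeff_sum, coeff_monomial]
  rw [← Finset.sum_filter, Finset.sum_congr rfl fun i hi => by rw [(Finset.mem_filter.1 hi).2],
    Finset.sum_const]

variable [Fintype σ]

theorem forall_sum_mul_prod_pow_eq_iff {K : Type*} [Field K] [CharZero K]
    (d : ι → σ → ℕ) (χ : (σ → ℕ) → K) :
    (∀ x : σ → K, ∑ i, χ (d i) * ∏ j, x j ^ d i j = ∑ i, ∏ j, x j ^ d i j) ↔
      ∀ i, χ (d i) = 1 := by
  classical
  refine ⟨fun h i => ?_, fun h x => Finset.sum_congr rfl fun i _ => by rw [h i, one_mul]⟩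
  let d' : ι → σ →₀ ℕ := fun i => Finsupp.equivFunOnFinite.symm (d i)
  have heval (c : (σ →₀ ℕ) → K) (x : σ → K) :
      eval x (∑ i, monomial (d' i) (c (d' i))) = ∑ i, c (d' i) * ∏ j, x j ^ d i j := by
    simp [d', eval_monomial, Finsupp.prod_pow]
  have hpoly : ∑ i, monomial (d' i) (χ (d' i)) = ∑ i, monomial (d' i) (1 : K) :=
    MvPolynomial.funext fun x => by
      rw [heval (fun e => χ e), heval fun _ => 1]; simpa [d'] using h x
  have hcoeff := congrArg (coeff (d' i)) hpoly
  rw [coeff_sum_monomial_comp d' (fun e => χ e), coeff_sum_monomial_comp d' fun _ => 1] at hcoeff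
  have hcard : #{i' | d' i' = d' i} ≠ 0 := Finset.card_ne_zero.2 ⟨i, by simp⟩
  simpa [d'] using nsmul_right_injective hcard hcoeff

end MonomialSums

theorem Complex.exp_two_pi_I_mul_ratCast_eq_one_iff (q : ℚ) :
    Complex.exp (2 * Real.pi * Complex.I * q) = 1 ↔ ∃ m : ℤ, q = m := by
  rw [Complex.exp_eq_one_iff]
  refine exists_congr fun m => ⟨fun h => ?_, fun h => by rw [h]; push_cast; ring⟩
  rw [mul_comm (m : ℂ)] at h
  exact_mod_cast mul_left_cancel₀ Complex.two_pi_I_ne_zero h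

theorem Complex.prod_exp_two_pi_I_mul_pow {σ : Type*} [Fintype σ] (z x : σ → ℂ) (n : σ → ℕ) :
    ∏ j, (Complex.exp (2 * Real.pi * Complex.I * z j) * x j) ^ n j =
      Complex.exp (2 * Real.pi * Complex.I * ∑ j, n j * z j) * ∏ j, x j ^ n j := by
  simp_rw [mul_pow, Finset.prod_mul_distrib, ← Complex.exp_nat_mul, ← Complex.exp_sum,
    Finset.mul_sum]
  congr 2
  refine Finset.sum_congr rfl fun j _ => by ring

theorem Matrix.mulVec_map_intCast_apply_eq_sum_toNat {ι : Type*} [Fintype ι]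
    (E : Matrix ι ι ℤ) (g : ι → ℚ) (i : ι) (hpos : ∀ j, 0 ≤ E i j) :
    ((Matrix.mulVec (E.map (Int.cast : ℤ → ℚ)) g) i : ℂ) = ∑ j, ((E i j).toNat : ℂ) * g j := by
  simp only [Matrix.mulVec, dotProduct, Matrix.map_apply, Rat.cast_sum, Rat.cast_mul,
    Rat.cast_intCast]
  refine Finset.sum_congr rfl fun j _ => ?_
  rw [← Int.cast_natCast, Int.toNat_of_nonneg (hpos j)]

theorem diagonal_symmetry_iff_general {N : ℕ} (E : Matrix (Fin N) (Fin N) ℤ)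
    (hpos : ∀ i j, 0 ≤ E i j)
    (g : Fin N → ℚ) :
    (∀ x : Fin N → ℂ,
        (∑ i, ∏ j, (Complex.exp (2 * Real.pi * Complex.I * ((g j : ℚ) : ℂ)) * x j) ^
          (E i j).toNat) =
        ∑ i, ∏ j, (x j) ^ (E i j).toNat) ↔
      ∀ i, ∃ m : ℤ, (Matrix.mulVec (E.map (Int.cast : ℤ → ℚ)) g) i = (m : ℚ) := by
  let χ : (Fin N → ℕ) → ℂ := fun n =>
    Complex.exp (2 * Real.pi * Complex.I * ∑ j, (n j : ℂ) * (g j : ℂ))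
  have hχ (i : Fin N) : χ (fun j => (E i j).toNat) = 1 ↔
      ∃ m : ℤ, (Matrix.mulVec (E.map (Int.cast : ℤ → ℚ)) g) i = m := by
    rw [← Complex.exp_two_pi_I_mul_ratCast_eq_one_iff,
      Matrix.mulVec_map_intCast_apply_eq_sum_toNat E g i (hpos i)]
  simp_rw [Complex.prod_exp_two_pi_I_mul_pow, ← hχ]
  exact forall_sum_mul_prod_pow_eq_iff (fun i j => (E i j).toNat) χ

/-- Characterization of the maximal diagonal symmetry group of an invertible polynomial:
`g = diag(e^{2πi g₁},…,e^{2πi g_N})` (with `gⱼ ∈ ℚ`) satisfies `W(g·x) = W(x)` for all `x`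
if and only if `E·g ∈ ℤ^N`. -/
theorem diagonal_symmetry_iff {N : ℕ} (E : Matrix (Fin N) (Fin N) ℤ)
    (hE : IsUnit (E.map (Int.cast : ℤ → ℚ)).det) (hpos : ∀ i j, 0 ≤ E i j)
    (g : Fin N → ℚ) :
    (∀ x : Fin N → ℂ,
        (∑ i, ∏ j, (Complex.exp (2 * Real.pi * Complex.I * ((g j : ℚ) : ℂ)) * x j) ^
          (E i j).toNat) =
        ∑ i, ∏ j, (x j) ^ (E i j).toNat) ↔
      ∀ i, ∃ m : ℤ, (Matrix.mulVec (E.map (Int.cast : ℤ → ℚ)) g) i = (m : ℚ) :=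
  diagonal_symmetry_iff_general E hpos g
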